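/- arXiv:0705.4085 — 5 statements merged into one kernel-verified Lean document; each statement's English description precedes it below -/
import Mathlib

section
/- For all relatively prime integers n and k with 2 ≤ k ≤ n, if ℓ in [1, k-1] satisfies ℓ·n ≡ 1 (mod k), then for all distinct i, j in [0, k-1], i·⌊ℓ·n/k⌋ is not congruent to j·⌊ℓ·n/k⌋ modulo n. -/
/-!
Writing `m = ⌊ℓn/k⌋`, the congruence `ℓn ≡ 1 (mod k)` says `ℓn = k·m + 1`, so `ℓ·n - k·m = 1` and
`m` is coprime to `n`. Hence `i·m ≡ j·m (mod n)` forces `i ≡ j (mod n)`, which is impossible for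
distinct `i, j ∈ [0, k-1]` since `|i - j| < k ≤ n`.
-/

theorem Int.isCoprime_ediv_of_modEq_one {a k n : ℤ} (hk : 1 < k) (hn : n ∣ a)
    (h : a ≡ 1 [ZMOD k]) : IsCoprime (a / k) n := by
  have hrem : a % k = 1 := h.eq.trans (Int.emod_eq_of_lt zero_le_one hk)
  obtain ⟨c, rfl⟩ := hn
  exact ⟨-k, c, by linear_combination hrem - Int.emod_add_mul_ediv (n * c) k⟩

theorem Int.ModEq.cancel_right_of_isCoprime {a b c n : ℤ} (hc : IsCoprime c n)
    (h : a * c ≡ b * c [ZMOD n]) : a ≡ b [ZMOD n] :=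
  Int.modEq_iff_dvd.mpr <| hc.symm.dvd_of_dvd_mul_right <| by
    simpa only [sub_mul] using Int.modEq_iff_dvd.mp h

theorem Int.ModEq.eq_of_abs_sub_lt {a b n : ℤ} (h : a ≡ b [ZMOD n]) (hab : |a - b| < n) :
    a = b :=
  sub_eq_zero.mp <| Int.eq_zero_of_abs_lt_dvd (Int.ModEq.dvd h.symm) hab

theorem stmt_3_general (n k : ℤ) (hk : 2 ≤ k) (hkn : k ≤ n)
    (l : ℤ) (hmod : l * n ≡ 1 [ZMOD k]) :
    ∀ i j : ℤ, 0 ≤ i → i ≤ k - 1 → 0 ≤ j → j ≤ k - 1 → i ≠ j →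
      ¬ (i * ((l * n) / k) ≡ j * ((l * n) / k) [ZMOD n]) := by
  intro i j hi0 hi1 hj0 hj1 hij h
  have hcop := Int.isCoprime_ediv_of_modEq_one (by omega) (dvd_mul_left n l) hmod
  exact hij <| (h.cancel_right_of_isCoprime hcop).eq_of_abs_sub_lt <|
    abs_lt.mpr ⟨by omega, by omega⟩

/-- For all relatively prime integers `n` and `k` with `2 ≤ k ≤ n`, if `ℓ ∈ [1, k-1]`
satisfies `ℓ·n ≡ 1 (mod k)`, then for all distinct `i, j ∈ [0, k-1]`,
`i·⌊ℓ·n/k⌋ ≢ j·⌊ℓ·n/k⌋ (mod n)`. -/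
theorem stmt_3 (n k : ℤ) (hk : 2 ≤ k) (hkn : k ≤ n) (hgcd : Int.gcd n k = 1)
    (l : ℤ) (hl1 : 1 ≤ l) (hl2 : l ≤ k - 1) (hmod : l * n ≡ 1 [ZMOD k]) :
    ∀ i j : ℤ, 0 ≤ i → i ≤ k - 1 → 0 ≤ j → j ≤ k - 1 → i ≠ j →
      ¬ (i * ((l * n) / k) ≡ j * ((l * n) / k) [ZMOD n]) :=
  stmt_3_general n k hk hkn l hmod
end

section
/- Let n ≥ k ≥ 2 be integers and let r_i = ⌊i·n/k⌋ for i ∈ ℤ, where indices are taken modulo k and values modulo n. Then for all ℓ ∈ [1, k] and i ∈ [0, k-1], the clockwise distance (r_{i+ℓ} − r_i) mod n lies in {⌊ℓ·n/k⌋, ⌈ℓ·n/k⌉}. -/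
/-- The clockwise distance from `x` to `y` on the circle `ℤ/n`:
the length of the clockwise arc from `x` to `y` (equal to `n` when `y = x`,
corresponding to going once around the circle). -/
def cw (n : ℕ) (x y : ZMod n) : ℕ := if y = x then n else (y - x).val

/-!
Write `a = i.val`. Modulo `n`, the onset `r_{i+ℓ}` equals `⌊(a+ℓ)n/k⌋` even when `a + ℓ` wraps
past `k`, since wrapping shifts the floor by exactly `n`. The difference
`⌊(an + ℓn)/k⌋ - ⌊an/k⌋` is `⌊ℓn/k⌋` plus the carry of the remainders, so it is `⌊ℓn/k⌋` or
`⌈ℓn/k⌉`; as `k ≤ n` and `ℓ ≤ k` it lies in `[1, n]`, hence it is the clockwise distance.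
-/

theorem Nat.add_sub_one_div_eq_div_add_one {b c : ℕ} (hc : 0 < c) (hb : b % c ≠ 0) :
    (b + c - 1) / c = b / c + 1 := by
  have hbc := Nat.div_add_mod' b c
  have hlt := Nat.mod_lt b hc
  apply Nat.div_eq_of_lt_le <;> simp only [add_mul, one_mul] <;> omega

theorem Nat.add_div_sub_div_eq_or (a b : ℕ) {c : ℕ} (hc : 0 < c) :
    (a + b) / c - a / c = b / c ∨ (a + b) / c - a / c = (b + c - 1) / c := by
  rw [Nat.add_div hc]
  split_ifs with hcarry
  · have hb : b % c ≠ 0 := by have := Nat.mod_lt a hc; omega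
    right
    rw [Nat.add_sub_one_div_eq_div_add_one hc hb, add_assoc, Nat.add_sub_cancel_left]
  · left
    rw [add_zero, Nat.add_sub_cancel_left]

theorem ZMod.natCast_mod_mul_div (a n k : ℕ) :
    (((a % k) * n / k : ℕ) : ZMod n) = ((a * n / k : ℕ) : ZMod n) := by
  rcases k.eq_zero_or_pos with rfl | hk
  · simp
  conv_rhs => rw [← Nat.mod_add_div a k, add_mul, mul_assoc, Nat.add_mul_div_left _ _ hk]
  simp

theorem cw_natCast_of_sub_le {n m M : ℕ} (hmM : m < M) (hle : M - m ≤ n) :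
    cw n m M = M - m := by
  rcases hle.eq_or_lt with heq | hlt
  · have hM : M = m + n := by omega
    rw [cw, if_pos (by simp [hM]), heq]
  · have hsub : (M : ZMod n) - m = ((M - m : ℕ) : ZMod n) := (Nat.cast_sub hmM.le).symm
    have hval : ((M - m : ℕ) : ZMod n).val = M - m := ZMod.val_natCast_of_lt hlt
    have hne : (M : ZMod n) ≠ m := by
      intro h
      rw [h, sub_self] at hsub
      rw [← hsub, ZMod.val_zero] at hval
      omega
    rw [cw, if_neg hne, hsub, hval]

theorem stmt_6_general (n k : ℕ) (hkn : k ≤ n) :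
    ∀ l : ℕ, 1 ≤ l → l ≤ k → ∀ i : ZMod k,
      cw n ((fun j : ZMod k => ((j.val * n / k : ℕ) : ZMod n)) i)
           ((fun j : ZMod k => ((j.val * n / k : ℕ) : ZMod n)) (i + (l : ZMod k)))
        = l * n / k ∨
      cw n ((fun j : ZMod k => ((j.val * n / k : ℕ) : ZMod n)) i)
           ((fun j : ZMod k => ((j.val * n / k : ℕ) : ZMod n)) (i + (l : ZMod k)))
        = (l * n + k - 1) / k := by
  intro l hl hlk i
  have hk : 0 < k := by omega
  have : NeZero k := ⟨hk.ne'⟩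
  have hidx : (i + l).val = (i.val + l) % k := by
    rw [ZMod.val_add, ZMod.val_natCast, Nat.add_mod_mod]
  have hstep := Nat.add_div_sub_div_eq_or (i.val * n) (l * n) hk
  rw [← add_mul] at hstep
  have hfloor_pos : 1 ≤ l * n / k := (Nat.le_div_iff_mul_le hk).2 (by nlinarith)
  have hfloor_le_ceil : l * n / k ≤ (l * n + k - 1) / k := Nat.div_le_div_right (by omega)
  -- `(l * n + k - 1) / k` unfolds to `l * n ⌈/⌉ k`
  have hceil_le : (l * n + k - 1) / k ≤ n :=
    (ceilDiv_le_iff_le_mul hk).2 (Nat.mul_le_mul_right n hlk)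
  simp only [hidx, ZMod.natCast_mod_mul_div]
  rwa [cw_natCast_of_sub_le (by omega) (by omega)]

/-- Let `n ≥ k ≥ 2` and let `r_i = ⌊i·n/k⌋` (indices mod `k`, values mod `n`)
be the Clough–Douthett rhythm. Then for all `ℓ ∈ [1, k]` and all `i`, the
clockwise distance from `r_i` to `r_{i+ℓ}` lies in `{⌊ℓn/k⌋, ⌈ℓn/k⌉}`. -/
theorem stmt_6 (n k : ℕ) (hk : 2 ≤ k) (hkn : k ≤ n) :
    ∀ l : ℕ, 1 ≤ l → l ≤ k → ∀ i : ZMod k,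
      cw n ((fun j : ZMod k => ((j.val * n / k : ℕ) : ZMod n)) i)
           ((fun j : ZMod k => ((j.val * n / k : ℕ) : ZMod n)) (i + (l : ZMod k)))
        = l * n / k ∨
      cw n ((fun j : ZMod k => ((j.val * n / k : ℕ) : ZMod n)) i)
           ((fun j : ZMod k => ((j.val * n / k : ℕ) : ZMod n)) (i + (l : ZMod k)))
        = (l * n + k - 1) / k :=
  stmt_6_general n k hkn
end

section
/- For all integers n and k with 2 ≤ k ≤ n, there is, up to rotation, a unique rhythm with k onsets and timespan n satisfying property (★): for all ℓ ∈ [1, k] and all i, the clockwise distance from r_i to r_{i+ℓ} lies in {⌊ℓn/k⌋, ⌈ℓn/k⌉}. -/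
/-- Property (★): for all `ℓ ∈ [1,k]` and all `i`, the clockwise distance from
`r_i` to `r_{i+ℓ}` lies in `{⌊ℓn/k⌋, ⌈ℓn/k⌉}`. -/
def StarProp (n k : ℕ) (r : ZMod k → ZMod n) : Prop :=
  ∀ l : ℕ, 1 ≤ l → l ≤ k → ∀ i : ZMod k,
    cw n (r i) (r (i + (l : ZMod k))) = l * n / k ∨
    cw n (r i) (r (i + (l : ZMod k))) = (l * n + k - 1) / k

/-! Put `f i = k * cw (r 0) (r i) - i * n` for `1 ≤ i ≤ k`. Property (★) makes the clockwise
distances additive along the rhythm and says `|f j - f i| < k`, so `f` takes its values in a window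
`[m, m + k)`; hence `r x = r 0 + ⌊(x n + e) / k⌋` with `e = m + k - 1`, and `gcd n k ∣ e + 1`.
Two such offsets differ by some `t n + u k` (Bézout), and changing the offset by `t n + u k` is
rotating the indices by `t` and the onsets by `u`. Conversely every offset gives a rhythm with (★),
and (★) with `k ≤ n` forces distinct onsets. -/

lemma natCast_cw {n : ℕ} [NeZero n] (x y : ZMod n) : ((cw n x y : ℕ) : ZMod n) = y - x := by
  unfold cw
  split_ifs with h
  · simp [h]
  · exact ZMod.natCast_zmod_val (y - x)

lemma natCast_cw_eq_of_sub_eq {n : ℕ} [NeZero n] {x y : ZMod n} {d : ℤ} (hd : 1 ≤ d) (hdn : d ≤ n)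
    (h : y - x = d) : (cw n x y : ℤ) = d := by
  lift d to ℕ using (by omega)
  norm_cast at hd hdn h ⊢
  unfold cw
  rcases hdn.eq_or_lt with rfl | hlt
  · rw [if_pos (sub_eq_zero.1 (h.trans (ZMod.natCast_self _)))]
  · have hne : (d : ZMod n) ≠ 0 := by
      rw [Ne, ZMod.natCast_eq_zero_iff]
      exact Nat.not_dvd_of_pos_of_lt hd hlt
    rw [if_neg (fun hyx => hne (by rw [← h, hyx, sub_self])), h, ZMod.val_natCast_of_lt hlt]

lemma eq_div_or_eq_ceil_div_iff {k : ℕ} (hk : 0 < k) (x c : ℕ) :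
    (c = x / k ∨ c = (x + k - 1) / k) ↔ |(k : ℤ) * c - x| < k := by
  rw [eq_comm, Nat.div_eq_iff hk, eq_comm, Nat.div_eq_iff hk, abs_lt, mul_comm c k]
  omega

def euclidRhythm (n k : ℕ) (e : ℤ) (x : ZMod k) : ZMod n :=
  (((x.val * n + e : ℤ) / k : ℤ) : ZMod n)

section
variable {n k : ℕ} [NeZero k]

lemma starProp_iff (r : ZMod k → ZMod n) :
    StarProp n k r ↔ ∀ l : ℕ, 1 ≤ l → l ≤ k → ∀ i : ZMod k,
      |(k : ℤ) * cw n (r i) (r (i + l)) - l * n| < k := by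
  simp only [StarProp, eq_div_or_eq_ceil_div_iff (NeZero.pos k), Nat.cast_mul]

lemma euclidRhythm_intCast (e i : ℤ) :
    euclidRhythm n k e i = (((i * n + e) / k : ℤ) : ZMod n) := by
  have hk : (k : ℤ) ≠ 0 := by exact_mod_cast NeZero.ne k
  have hsplit : i * n + e = (i % k * n + e) + k * (i / k * n) := by
    conv_lhs => rw [← Int.emod_add_mul_ediv i k]
    ring
  rw [euclidRhythm, ZMod.val_intCast, hsplit, Int.add_mul_ediv_left _ _ hk]
  push_cast
  simp

lemma euclidRhythm_starProp (hkn : k ≤ n) (e : ℤ) : StarProp n k (euclidRhythm n k e) := by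
  have : NeZero n := NeZero.of_gt (Nat.lt_of_lt_of_le (NeZero.pos k) hkn)
  rw [starProp_iff]
  intro l hl hlk x
  set a : ℤ := (x.val : ℤ)
  have hx : x = (a : ZMod k) := by simp [a]
  have hxl : x + l = ((a + l : ℤ) : ZMod k) := by push_cast; rw [← hx]
  rw [hxl, hx, euclidRhythm_intCast, euclidRhythm_intCast]
  set A := (a * n + e) / k
  set B := ((a + l) * n + e) / k
  have hk : (0 : ℤ) < k := by exact_mod_cast NeZero.pos k
  have hA : A * k ≤ a * n + e := Int.ediv_mul_le _ hk.ne'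
  have hA' : a * n + e < (A + 1) * k := Int.lt_ediv_add_one_mul_self _ hk
  have hB : B * k ≤ (a + l) * n + e := Int.ediv_mul_le _ hk.ne'
  have hB' : (a + l) * n + e < (B + 1) * k := Int.lt_ediv_add_one_mul_self _ hk
  have hln : (n : ℤ) ≤ l * n := by nlinarith
  have hlkn : (l : ℤ) * n ≤ k * n := by gcongr
  have hkn' : (k : ℤ) ≤ n := by exact_mod_cast hkn
  have hD : (cw n (A : ZMod n) (B : ZMod n) : ℤ) = B - A := by
    apply natCast_cw_eq_of_sub_eq
    · nlinarith
    · nlinarith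
    · push_cast; ring
  rw [abs_lt, hD]
  constructor <;> nlinarith

variable {r : ZMod k → ZMod n}

lemma StarProp.injective (hr : StarProp n k r) (hkn : k ≤ n) : Function.Injective r := by
  intro x y hxy
  by_contra hne
  set l := (y - x).val
  have hl : 1 ≤ l := ZMod.val_pos.2 (sub_ne_zero.2 (Ne.symm hne))
  have hlk : l < k := ZMod.val_lt _
  have hy : x + (l : ZMod k) = y := by simp [l]
  have h := (starProp_iff r).1 hr l hl hlk.le x
  rw [hy, cw, if_pos hxy.symm, abs_lt] at h
  have : ((l : ℤ) + 1) * n ≤ k * n := by gcongr; exact_mod_cast hlk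
  nlinarith

lemma StarProp.cw_add (hr : StarProp n k r) (hkn : k ≤ n) {l m : ℕ} (hl : 1 ≤ l) (hm : 1 ≤ m)
    (hlm : l + m ≤ k) (x : ZMod k) :
    cw n (r x) (r (x + ↑(l + m))) = cw n (r x) (r (x + l)) + cw n (r (x + l)) (r (x + l + m)) := by
  have : NeZero n := NeZero.of_gt (Nat.lt_of_lt_of_le (NeZero.pos k) hkn)
  rw [starProp_iff] at hr
  set c₁ := cw n (r x) (r (x + l))
  set c₂ := cw n (r (x + l)) (r (x + l + m))
  set c := cw n (r x) (r (x + ↑(l + m)))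
  have h₁ : |(k : ℤ) * c₁ - l * n| < k := hr l hl (by omega) x
  have h₂ : |(k : ℤ) * c₂ - m * n| < k := hr m hm (by omega) (x + l)
  have h : |(k : ℤ) * c - (l + m) * n| < k := by exact_mod_cast hr (l + m) (by omega) hlm x
  rw [abs_lt] at h₁ h₂ h
  have hdvd : (n : ℤ) ∣ c₁ + c₂ - c := by
    rw [← ZMod.intCast_zmod_eq_zero_iff_dvd]
    push_cast
    simp only [c₁, c₂, c, natCast_cw, Nat.cast_add, ← add_assoc]
    ring
  have hk : (0 : ℤ) < k := by exact_mod_cast NeZero.pos k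
  have hkn' : (k : ℤ) ≤ n := by exact_mod_cast hkn
  have hln : (n : ℤ) ≤ l * n := by nlinarith
  have hmn : (n : ℤ) ≤ m * n := by nlinarith
  have hlmn : ((l : ℤ) + m) * n ≤ k * n := by gcongr; exact_mod_cast hlm
  -- `c₁ + c₂ - c` is a multiple of `n` in `(-n, n)`; the lower bound `2 ≤ c` matters when `n = 2`
  have hc₁ : (0 : ℤ) < c₁ := lt_of_mul_lt_mul_left (a := (k : ℤ)) (by linarith) hk.le
  have hc₂ : (0 : ℤ) < c₂ := lt_of_mul_lt_mul_left (a := (k : ℤ)) (by linarith) hk.le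
  have hc : (1 : ℤ) < c := lt_of_mul_lt_mul_left (a := (k : ℤ)) (by linarith) hk.le
  have hcn : (c : ℤ) < n + 1 := lt_of_mul_lt_mul_left (a := (k : ℤ)) (by linarith) hk.le
  have hsum : (c₁ : ℤ) + c₂ < n + 2 := lt_of_mul_lt_mul_left (a := (k : ℤ)) (by linarith) hk.le
  have := Int.eq_zero_of_abs_lt_dvd hdvd (abs_lt.2 ⟨by omega, by omega⟩)
  omega

lemma StarProp.exists_euclidRhythm (hr : StarProp n k r) (hkn : k ≤ n) :
    ∃ e : ℤ, gcd (n : ℤ) k ∣ e + 1 ∧ ∀ x, r x = r 0 + euclidRhythm n k e x := by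
  have : NeZero n := NeZero.of_gt (Nat.lt_of_lt_of_le (NeZero.pos k) hkn)
  have hk : (0 : ℤ) < k := by exact_mod_cast NeZero.pos k
  set f : ℕ → ℤ := fun i => k * cw n (r 0) (r i) - i * n
  have hdiff : ∀ i j, 1 ≤ i → i < j → j ≤ k → |f j - f i| < k := by
    intro i j hi hij hjk
    have hadd := hr.cw_add hkn hi (Nat.sub_pos_of_lt hij) (by omega) 0
    simp only [zero_add, ← Nat.cast_add, Nat.add_sub_cancel' hij.le] at hadd
    have hstar := (starProp_iff r).1 hr (j - i) (by omega) (by omega) i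
    rw [← Nat.cast_add, Nat.add_sub_cancel' hij.le, Nat.cast_sub hij.le] at hstar
    simp only [f, hadd]
    convert hstar using 2
    push_cast
    ring
  obtain ⟨i₀, hi₀, hmin⟩ := (Finset.Icc 1 k).exists_min_image f
    ⟨k, Finset.mem_Icc.2 ⟨NeZero.one_le, le_rfl⟩⟩
  have hfk : f k = 0 := by simp [f, cw]
  have hupper : ∀ i ∈ Finset.Icc 1 k, f i < f i₀ + k := by
    intro i hi
    rw [Finset.mem_Icc] at hi hi₀
    rcases lt_trichotomy i i₀ with h | rfl | h
    · linarith [(abs_lt.1 (hdiff i i₀ hi.1 h hi₀.2)).1]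
    · linarith
    · linarith [(abs_lt.1 (hdiff i₀ i hi₀.1 h hi.2)).2]
  have hkmem : k ∈ Finset.Icc 1 k := Finset.mem_Icc.2 ⟨NeZero.one_le, le_rfl⟩
  have hmin_k := hmin k hkmem
  have hupper_k := hupper k hkmem
  refine ⟨f i₀ + k - 1, ?_, fun x => ?_⟩
  · rw [sub_add_cancel]
    exact dvd_add (dvd_sub (dvd_mul_of_dvd_left (gcd_dvd_right _ _) _)
      (dvd_mul_of_dvd_right (gcd_dvd_left _ _) _)) (gcd_dvd_right _ _)
  rcases eq_or_ne x 0 with rfl | hx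
  · rw [euclidRhythm, ZMod.val_zero, Int.ediv_eq_zero_of_lt (by omega) (by omega)]
    simp
  · have hxmem : x.val ∈ Finset.Icc 1 k :=
      Finset.mem_Icc.2 ⟨ZMod.val_pos.2 hx, (ZMod.val_lt x).le⟩
    have hlo := hmin x.val hxmem
    have hhi := hupper x.val hxmem
    simp only [f, ZMod.natCast_zmod_val] at hlo hhi
    have hcw : (cw n (r 0) (r x) : ℤ) = (x.val * n + (f i₀ + k - 1)) / k := by
      symm
      rw [Int.ediv_eq_iff_of_pos hk]
      constructor <;> linarith
    rw [euclidRhythm, ← hcw, Int.cast_natCast, natCast_cw, add_sub_cancel]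

lemma euclidRhythm_add_eq {e t u : ℤ} (x : ZMod k) :
    euclidRhythm n k (e + t * n + u * k) x = euclidRhythm n k e (x + t) + u := by
  have hk : (k : ℤ) ≠ 0 := by exact_mod_cast NeZero.ne k
  obtain ⟨i, rfl⟩ := ZMod.intCast_surjective x
  rw [← Int.cast_add, euclidRhythm_intCast, euclidRhythm_intCast,
    show i * n + (e + t * n + u * k) = (i + t) * n + e + u * k by ring,
    Int.add_mul_ediv_right _ _ hk]
  push_cast
  rfl

lemma StarProp.exists_forall_eq_add_add {r' : ZMod k → ZMod n} (hr : StarProp n k r)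
    (hr' : StarProp n k r') (hkn : k ≤ n) :
    ∃ (t : ZMod k) (c : ZMod n), ∀ x, r' x = r (x + t) + c := by
  obtain ⟨e, he, hre⟩ := hr.exists_euclidRhythm hkn
  obtain ⟨e', he', hre'⟩ := hr'.exists_euclidRhythm hkn
  obtain ⟨t, u, htu⟩ := (gcd_dvd_iff_exists (n : ℤ) k).1
    (show gcd (n : ℤ) k ∣ e' - e by simpa using dvd_sub he' he)
  have he'_eq : e' = e + t * n + u * k := by linear_combination htu
  refine ⟨t, r' 0 - r 0 + u, fun x => ?_⟩
  rw [hre', he'_eq, euclidRhythm_add_eq, hre]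
  ring
end

lemma range_eq_image_add_of_forall_eq {G H : Type*} [AddGroup G] [Add H] {r r' : G → H} {t : G}
    {c : H} (h : ∀ x, r' x = r (x + t) + c) : Set.range r' = (· + c) '' Set.range r := by
  rw [show r' = (· + c) ∘ r ∘ (· + t) from funext h, Set.range_comp,
    (add_right_surjective t).range_comp]

/-- For all integers `2 ≤ k ≤ n` there is, up to rotation, a unique rhythm with
`k` onsets and timespan `n` satisfying property (★). -/
theorem stmt_8 (n k : ℕ) (hk : 2 ≤ k) (hkn : k ≤ n) :
    (∃ r : ZMod k → ZMod n, Function.Injective r ∧ StarProp n k r) ∧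
    (∀ r r' : ZMod k → ZMod n,
      Function.Injective r → StarProp n k r →
      Function.Injective r' → StarProp n k r' →
      ∃ Δ : ZMod n, Set.range r' = (fun x => x + Δ) '' Set.range r) := by
  have : NeZero k := NeZero.of_gt hk
  refine ⟨⟨euclidRhythm n k 0, (euclidRhythm_starProp hkn 0).injective hkn,
    euclidRhythm_starProp hkn 0⟩, fun r r' _ hr _ hr' => ?_⟩
  obtain ⟨t, c, h⟩ := hr.exists_forall_eq_add_add hr' hkn
  exact ⟨c, range_eq_image_add_of_forall_eq h⟩
end

section
/- If k ≤ ⌊n/2⌋ + 1 and gcd(m, n) = 1, then the map i ↦ i·m mod n is injective on [0, k−1], and for 0 ≤ p < q ≤ ⌊n/2⌋ the geodesic distances min(p·m mod n, (−p·m) mod n) and min(q·m mod n, (−q·m) mod n) are distinct. -/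
/-- The geodesic distance between `x` and `y` on the circle `ℤ/n`. -/
def geo (n : ℕ) (x y : ZMod n) : ℕ := min (y - x).val (x - y).val

/-!
Multiplication by `m` is invertible modulo `n`, so `i * m ≡ j * m` forces `i ≡ j`, hence `i = j`
for `i, j ≤ n / 2`. The distance `geo n 0 x` is `|valMinAbs x|`, so equal distances mean
`p * m = ± q * m` in `ZMod n`; the sign `+` gives `p = q`, the sign `-` gives `n ∣ p + q`,
impossible as `0 < p + q < n`.
-/

theorem Nat.ModEq.eq_of_le_half {n a b : ℕ} (h : a ≡ b [MOD n]) (ha : a ≤ n / 2)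
    (hb : b ≤ n / 2) : a = b := by
  rcases Nat.eq_zero_or_pos n with rfl | hn
  · omega
  · exact h.eq_of_lt_of_lt (by omega) (by omega)

theorem geo_zero_eq_natAbs_valMinAbs {n : ℕ} (x : ZMod n) :
    geo n 0 x = x.valMinAbs.natAbs := by
  rcases eq_zero_or_neZero n with rfl | hn
  · simp only [geo, sub_zero, zero_sub, ZMod.val, ZMod.valMinAbs]
    exact min_eq_left (Int.natAbs_neg x).ge
  · rw [ZMod.valMinAbs_natAbs_eq_min, geo, sub_zero, zero_sub, ZMod.neg_val]
    split_ifs with hx <;> simp [hx]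

theorem geo_zero_eq_geo_zero_iff {n : ℕ} {x y : ZMod n} :
    geo n 0 x = geo n 0 y ↔ x = y ∨ x = -y := by
  rw [geo_zero_eq_natAbs_valMinAbs, geo_zero_eq_natAbs_valMinAbs,
    ZMod.natAbs_valMinAbs_eq_natAbs_valMinAbs]

theorem stmt_13_general (n k m : ℕ)
    (hkn : k ≤ n / 2 + 1) (hgcd : Nat.gcd m n = 1) :
    (∀ i j : ℕ, i ≤ k - 1 → j ≤ k - 1 →
        ((i * m : ℕ) : ZMod n) = ((j * m : ℕ) : ZMod n) → i = j) ∧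
    (∀ p q : ℕ, p < q → q ≤ n / 2 →
        geo n 0 ((p * m : ℕ) : ZMod n) ≠ geo n 0 ((q * m : ℕ) : ZMod n)) := by
  have hcop : Nat.Coprime n m := Nat.coprime_comm.mp hgcd
  have cancel {a b : ℕ} (h : ((a * m : ℕ) : ZMod n) = ((b * m : ℕ) : ZMod n)) :
      a ≡ b [MOD n] :=
    ((ZMod.natCast_eq_natCast_iff _ _ _).mp h).cancel_right_of_coprime hcop
  refine ⟨fun i j hi hj h => (cancel h).eq_of_le_half (by omega) (by omega), ?_⟩
  intro p q hpq hq h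
  rcases geo_zero_eq_geo_zero_iff.mp h with h | h
  · exact hpq.ne ((cancel h).eq_of_le_half (by omega) hq)
  · have hsum : (((p + q) * m : ℕ) : ZMod n) = 0 := by
      push_cast at h ⊢
      linear_combination h
    have hdvd : n ∣ p + q :=
      hcop.dvd_of_dvd_mul_right ((ZMod.natCast_eq_zero_iff _ _).mp hsum)
    have hle : n ≤ p + q := Nat.le_of_dvd (by omega) hdvd
    omega

/-- If `k ≤ ⌊n/2⌋ + 1` and `gcd(m,n) = 1`, the map `i ↦ i·m mod n` is injective
on `[0, k-1]`, and for `0 ≤ p < q ≤ ⌊n/2⌋` the geodesic distances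
`min(p·m mod n, (−p·m) mod n)` and `min(q·m mod n, (−q·m) mod n)` are distinct. -/
theorem stmt_13 (n k m : ℕ) (hn : 0 < n) (hm : 0 < m) (hk : 0 < k)
    (hkn : k ≤ n / 2 + 1) (hgcd : Nat.gcd m n = 1) :
    (∀ i j : ℕ, i ≤ k - 1 → j ≤ k - 1 →
        ((i * m : ℕ) : ZMod n) = ((j * m : ℕ) : ZMod n) → i = j) ∧
    (∀ p q : ℕ, p < q → q ≤ n / 2 →
        geo n 0 ((p * m : ℕ) : ZMod n) ≠ geo n 0 ((q * m : ℕ) : ZMod n)) :=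
  stmt_13_general n k m hkn hgcd
end

section
/- For m with gcd(m, n) = 1 and k ≤ ⌊n/2⌋ + 1, removing the onset (k−1)·m mod n from D_{k,n,m} yields D_{k−1,n,m}, which is again Erdős-deep; hence every generated rhythm D_{k,n,m} with these parameters has a shelling. -/
/-- The multiset of pairwise geodesic distances between distinct onsets of `R`. -/
def pairDists (n : ℕ) (R : Finset (ZMod n)) : Multiset ℕ :=
  (R.sym2.filter fun s => ¬ s.IsDiag).val.map
    (Sym2.lift ⟨geo n, fun a b => by unfold geo; rw [min_comm]⟩)

/-- A rhythm is Erdős-deep if for each `i ∈ [1, k-1]` (where `k` is the number of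
onsets) there is exactly one nonzero geodesic distance occurring exactly `i`
times in the multiset of pairwise geodesic distances. -/
def ErdosDeep (n : ℕ) (R : Finset (ZMod n)) : Prop :=
  ∀ i : ℕ, 1 ≤ i → i ≤ R.card - 1 →
    ∃! d : ℕ, d ≠ 0 ∧ Multiset.count d (pairDists n R) = i

/-- The generated rhythm `D_{k,n,m} = {i·m mod n : 0 ≤ i ≤ k-1}` of timespan `n`. -/
def genRhythm (k n m : ℕ) : Finset (ZMod n) :=
  (Finset.range k).image (fun i => ((i * m : ℕ) : ZMod n))

/-!
Write `onset i = i·m` in `ℤ/n`. The distance between onsets `i < j` depends only on the index gap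
`j - i`: it is the circular length `stepDist (j - i)` of `(j - i)·m`. Since `m` is a unit mod `n`,
`stepDist` is injective and nonzero on `[1, n/2]`, so in `D_{k,n,m}` with `k ≤ n/2 + 1` the distance
`stepDist d` occurs exactly `k - d` times, once for every pair of indices with gap `d`, and no other
distance occurs. Multiplicity `i` is thus realized by `stepDist (k - i)` alone. Removing the onsets
in reverse order of generation passes through `D_{k-1,n,m}, D_{k-2,n,m}, …`, all Erdős-deep.
-/

open Finset

theorem geo_comm {n : ℕ} (x y : ZMod n) : geo n x y = geo n y x :=
  min_comm _ _

theorem geo_eq_natAbs_valMinAbs {n : ℕ} [NeZero n] (x y : ZMod n) :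
    geo n x y = (y - x).valMinAbs.natAbs := by
  rw [geo, ZMod.valMinAbs_natAbs_eq_min, ← neg_sub y x, ZMod.neg_val]
  split_ifs with h <;> simp [h]

theorem pairDists_insert {n : ℕ} {a : ZMod n} {R : Finset (ZMod n)} (ha : a ∉ R) :
    pairDists n (insert a R) = R.val.map (geo n a) + pairDists n R := by
  rw [← cons_eq_insert a R ha, pairDists, pairDists, sym2_cons, filter_disjUnion, disjUnion_val,
    Multiset.map_add, filter_map]
  have hfil : (cons a R ha).filter ((fun s => ¬ s.IsDiag) ∘ Sym2.mkEmbedding a) = R := by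
    ext b
    simp only [mem_filter, mem_cons, Function.comp_apply, Sym2.mkEmbedding_apply, Sym2.mk_isDiag_iff]
    grind
  rw [hfil, map_val, Multiset.map_map]
  rfl

/-- The index gaps `j - i` of all pairs `i < j < k`: for fixed `j` they fill `Icc 1 j`. -/
def indexGaps (k : ℕ) : Multiset ℕ := ∑ j ∈ range k, (Icc 1 j).val

theorem indexGaps_succ (k : ℕ) : indexGaps (k + 1) = indexGaps k + (Icc 1 k).val :=
  sum_range_succ _ _

theorem map_range_sub_eq_Icc (k : ℕ) : (range k).val.map (k - ·) = (Icc 1 k).val := by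
  refine (Multiset.Nodup.ext ?_ (Icc 1 k).nodup).2 fun d => ?_
  · exact (range k).nodup.map_on fun i hi j hj h => by
      simp only [mem_val, mem_range] at hi hj
      omega
  · simp only [Multiset.mem_map, mem_val, mem_range, mem_Icc]
    constructor
    · rintro ⟨i, hi, rfl⟩
      omega
    · rintro ⟨hd1, hd2⟩
      exact ⟨k - d, by omega, by omega⟩

theorem mem_indexGaps {k d : ℕ} : d ∈ indexGaps k ↔ 1 ≤ d ∧ d < k := by
  simp only [indexGaps, Multiset.mem_sum, mem_range, mem_val, mem_Icc]
  constructor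
  · rintro ⟨j, hj, hd1, hdj⟩
    omega
  · rintro ⟨hd1, hdk⟩
    exact ⟨d, hdk, hd1, le_rfl⟩

theorem count_indexGaps {k d : ℕ} (hd : 1 ≤ d) : (indexGaps k).count d = k - d := by
  simp only [indexGaps, Multiset.count_sum', Multiset.count_eq_of_nodup (Icc 1 _).nodup, mem_val,
    sum_boole, Nat.cast_id]
  have hgaps : {j ∈ range k | d ∈ Icc 1 j} = Ico d k := by
    ext j
    simp only [mem_filter, mem_range, mem_Icc, mem_Ico]
    omega
  rw [hgaps, Nat.card_Ico]

section Generated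

variable {n m : ℕ}

def onset (n m i : ℕ) : ZMod n := ((i * m : ℕ) : ZMod n)

def stepDist (n m d : ℕ) : ℕ := (onset n m d).valMinAbs.natAbs

theorem onset_zero : onset n m 0 = 0 := by
  simp [onset]

theorem onset_add (i j : ℕ) : onset n m (i + j) = onset n m i + onset n m j := by
  simp [onset, add_mul]

theorem onset_injOn (hgcd : Nat.gcd m n = 1) : Set.InjOn (onset n m) (Set.Iio n) := by
  intro a ha b hb h
  have hm : IsUnit (m : ZMod n) := (ZMod.isUnit_iff_coprime m n).2 hgcd
  simp only [onset, Nat.cast_mul, hm.mul_left_inj, ZMod.natCast_eq_natCast_iff'] at h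
  rwa [Nat.mod_eq_of_lt ha, Nat.mod_eq_of_lt hb] at h

theorem geo_onset_onset [NeZero n] {i j : ℕ} (hij : i ≤ j) :
    geo n (onset n m i) (onset n m j) = stepDist n m (j - i) := by
  rw [geo_eq_natAbs_valMinAbs, stepDist, onset, onset, onset, Nat.sub_mul,
    Nat.cast_sub (Nat.mul_le_mul_right m hij)]

theorem stepDist_ne_zero (hgcd : Nat.gcd m n = 1) {d : ℕ} (hd : d ∈ Set.Icc 1 (n / 2)) :
    stepDist n m d ≠ 0 := by
  obtain ⟨hd1, hd2⟩ := hd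
  rw [stepDist, Int.natAbs_ne_zero, Ne, ZMod.valMinAbs_eq_zero, ← onset_zero]
  intro h
  have := onset_injOn hgcd (show d < n by omega) (show 0 < n by omega) h
  omega

theorem stepDist_injOn (hgcd : Nat.gcd m n = 1) :
    Set.InjOn (stepDist n m) (Set.Icc 1 (n / 2)) := by
  rintro d ⟨hd1, hd2⟩ e ⟨he1, he2⟩ h
  rw [stepDist, stepDist, ZMod.natAbs_valMinAbs_eq_natAbs_valMinAbs] at h
  rcases h with h | h
  · exact onset_injOn hgcd (show d < n by omega) (show e < n by omega) h
  · rw [eq_neg_iff_add_eq_zero, ← onset_add, ← onset_zero] at h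
    -- `(d + e)·m ≡ 0` with `0 < d + e ≤ n` forces `d + e = n`, hence `d = e = n / 2`
    obtain hlt | heq := (show d + e ≤ n by omega).lt_or_eq
    · have := onset_injOn hgcd hlt (show 0 < n by omega) h
      omega
    · omega

theorem genRhythm_eq_image (k : ℕ) : genRhythm k n m = (range k).image (onset n m) := rfl

theorem genRhythm_succ (k : ℕ) :
    genRhythm (k + 1) n m = insert (onset n m k) (genRhythm k n m) := by
  rw [genRhythm_eq_image, range_add_one, image_insert, genRhythm_eq_image]

theorem onset_injOn_range (hgcd : Nat.gcd m n = 1) {k : ℕ} (hk : k ≤ n) :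
    Set.InjOn (onset n m) (range k) :=
  (onset_injOn hgcd).mono (by simpa using hk)

theorem card_genRhythm (hgcd : Nat.gcd m n = 1) {k : ℕ} (hk : k ≤ n) :
    #(genRhythm k n m) = k := by
  rw [genRhythm_eq_image, card_image_of_injOn (onset_injOn_range hgcd hk), card_range]

theorem onset_notMem_genRhythm (hgcd : Nat.gcd m n = 1) {k : ℕ} (hk : k < n) :
    onset n m k ∉ genRhythm k n m := by
  rw [genRhythm_eq_image, mem_image]
  rintro ⟨i, hi, h⟩
  rw [mem_range] at hi
  exact hi.ne (onset_injOn hgcd (hi.trans hk) hk h)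

theorem pairDists_genRhythm [NeZero n] (hgcd : Nat.gcd m n = 1) {k : ℕ} (hk : k ≤ n) :
    pairDists n (genRhythm k n m) = (indexGaps k).map (stepDist n m) := by
  induction k with
  | zero => simp [genRhythm, pairDists, indexGaps]
  | succ k ih =>
    have hkn : k < n := hk
    have hnew : (genRhythm k n m).val.map (geo n (onset n m k)) =
        (Icc 1 k).val.map (stepDist n m) := by
      rw [genRhythm_eq_image, image_val_of_injOn (onset_injOn_range hgcd hkn.le),
        Multiset.map_map, ← map_range_sub_eq_Icc, Multiset.map_map]
      refine Multiset.map_congr rfl fun i hi => ?_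
      rw [mem_val, mem_range] at hi
      rw [Function.comp_apply, geo_comm, geo_onset_onset hi.le]
      rfl
    rw [genRhythm_succ, pairDists_insert (onset_notMem_genRhythm hgcd hkn), ih hkn.le, hnew,
      indexGaps_succ, Multiset.map_add, add_comm]

theorem count_stepDist_pairDists_genRhythm [NeZero n] (hgcd : Nat.gcd m n = 1) {k d : ℕ}
    (hk : k ≤ n / 2 + 1) (hd : d ∈ indexGaps k) :
    (pairDists n (genRhythm k n m)).count (stepDist n m d) = k - d := by
  have hgaps : {e | e ∈ indexGaps k} ⊆ Set.Icc 1 (n / 2) := fun e he => by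
    have := mem_indexGaps.1 he
    exact ⟨this.1, by omega⟩
  rw [pairDists_genRhythm hgcd (by have := NeZero.pos n; omega),
    Multiset.count_map_eq_count _ _ ((stepDist_injOn hgcd).mono hgaps) _ hd,
    count_indexGaps (mem_indexGaps.1 hd).1]

theorem erdosDeep_genRhythm [NeZero n] (hgcd : Nat.gcd m n = 1) {k : ℕ} (hk : k ≤ n / 2 + 1) :
    ErdosDeep n (genRhythm k n m) := by
  have hkn : k ≤ n := by have := NeZero.pos n; omega
  intro i hi hik
  rw [card_genRhythm hgcd hkn] at hik
  have hd : k - i ∈ indexGaps k := mem_indexGaps.2 ⟨by omega, by omega⟩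
  refine ⟨stepDist n m (k - i), ⟨stepDist_ne_zero hgcd ⟨by omega, by omega⟩, ?_⟩, ?_⟩
  · rw [count_stepDist_pairDists_genRhythm hgcd hk hd]
    omega
  · rintro v ⟨-, hv⟩
    have hmem : v ∈ (indexGaps k).map (stepDist n m) := by
      rw [← pairDists_genRhythm hgcd hkn, ← Multiset.count_pos, hv]
      exact hi
    obtain ⟨e, he, rfl⟩ := Multiset.mem_map.1 hmem
    rw [count_stepDist_pairDists_genRhythm hgcd hk he] at hv
    rw [show e = k - i by omega]

def shellingOrder (n m : ℕ) : ℕ → List (ZMod n)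
  | 0 => []
  | k + 1 => onset n m k :: shellingOrder n m k

theorem toFinset_shellingOrder (k : ℕ) : (shellingOrder n m k).toFinset = genRhythm k n m := by
  induction k with
  | zero => rfl
  | succ k ih => rw [shellingOrder, List.toFinset_cons, ih, genRhythm_succ]

theorem nodup_shellingOrder (hgcd : Nat.gcd m n = 1) {k : ℕ} (hk : k ≤ n) :
    (shellingOrder n m k).Nodup := by
  induction k with
  | zero => exact List.nodup_nil
  | succ k ih =>
    refine List.nodup_cons.2 ⟨?_, ih (by omega)⟩
    rw [← List.mem_toFinset, toFinset_shellingOrder]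
    exact onset_notMem_genRhythm hgcd hk

theorem genRhythm_sdiff_take_shellingOrder (hgcd : Nat.gcd m n = 1) {k : ℕ} (hk : k ≤ n)
    (i : ℕ) : genRhythm k n m \ ((shellingOrder n m k).take i).toFinset = genRhythm (k - i) n m := by
  induction k generalizing i with
  | zero => simp [genRhythm]
  | succ k ih =>
    cases i with
    | zero => simp
    | succ i =>
      rw [shellingOrder, List.take_succ_cons, List.toFinset_cons, genRhythm_succ,
        insert_sdiff_insert, sdiff_insert_of_notMem (onset_notMem_genRhythm hgcd hk), ih (by omega),
        Nat.add_sub_add_right]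

end Generated

theorem stmt_17_general (n k m : ℕ) (hn : 0 < n)
    (hkn : k ≤ n / 2 + 1) (hgcd : Nat.gcd m n = 1) :
    (genRhythm k n m).erase (((k - 1) * m : ℕ) : ZMod n) = genRhythm (k - 1) n m ∧
    ErdosDeep n (genRhythm (k - 1) n m) ∧
    (∃ l : List (ZMod n), l.Nodup ∧ l.toFinset = genRhythm k n m ∧
      ∀ i : ℕ, i ≤ l.length → ErdosDeep n (genRhythm k n m \ (l.take i).toFinset)) := by
  have : NeZero n := ⟨hn.ne'⟩
  have hk : k ≤ n := by omega
  refine ⟨?_, erdosDeep_genRhythm hgcd (by omega), shellingOrder n m k,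
    nodup_shellingOrder hgcd hk, toFinset_shellingOrder k, fun i _ => ?_⟩
  · cases k with
    | zero => rfl
    | succ k =>
      rw [Nat.add_sub_cancel, genRhythm_succ]
      exact erase_insert (onset_notMem_genRhythm hgcd hk)
  · rw [genRhythm_sdiff_take_shellingOrder hgcd hk]
    exact erdosDeep_genRhythm hgcd (by omega)

/-- For `gcd(m,n) = 1` and `k ≤ ⌊n/2⌋ + 1`, removing the onset `(k-1)·m mod n`
from `D_{k,n,m}` yields `D_{k-1,n,m}`, which is again Erdős-deep; hence every
such generated rhythm has a shelling. -/
theorem stmt_17 (n k m : ℕ) (hn : 0 < n) (hm : 0 < m) (hk : 1 ≤ k)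
    (hkn : k ≤ n / 2 + 1) (hgcd : Nat.gcd m n = 1) :
    (genRhythm k n m).erase (((k - 1) * m : ℕ) : ZMod n) = genRhythm (k - 1) n m ∧
    ErdosDeep n (genRhythm (k - 1) n m) ∧
    (∃ l : List (ZMod n), l.Nodup ∧ l.toFinset = genRhythm k n m ∧
      ∀ i : ℕ, i ≤ l.length → ErdosDeep n (genRhythm k n m \ (l.take i).toFinset)) :=
  stmt_17_general n k m hn hkn hgcd
end
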